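/- arXiv:1212.5534 — 3 statements merged into one kernel-verified Lean document; each statement's English description precedes it below -/
import Mathlib

section
/- For all integers n with 1 ≤ n ≤ N, all k with 1 ≤ k ≤ n, real t > 0, and real x, the convolution (φ_n ∗ Ψ_{n-k}^{n,t})(x) := ∫_{-∞}^{x} e^{μ_n(y-x)} Ψ_{n-k}^{n,t}(y) dy equals Ψ_{n-1-k}^{n-1,t}(x). -/
open Complex MeasureTheory Finset

/-- `linePsi μ μm n k t x` is
`Ψ_{n-k}^{n,t}(x) = ((-1)^{n-k}/(2πi)) ∫_{iℝ+μ_-} dz e^{t z²/2 - x z}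
  (z-μ_1)⋯(z-μ_n)/((z-μ_1)⋯(z-μ_k))`,
parametrizing the vertical line `Re z = μ_-` as `z = μ_- + i y`, `dz = i dy`. -/
noncomputable def linePsi (μ : ℕ → ℝ) (μm : ℝ) (n k : ℕ) (t x : ℝ) : ℂ :=
  ((-1 : ℂ) ^ ((n : ℤ) - (k : ℤ)) / (2 * (Real.pi : ℂ) * I)) *
    ∫ y : ℝ,
      I * Complex.exp ((t : ℂ) * ((μm : ℂ) + I * y) ^ 2 / 2 - (x : ℂ) * ((μm : ℂ) + I * y)) *
        ((∏ j ∈ Finset.Icc 1 n, (((μm : ℂ) + I * y) - (μ j : ℂ))) /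
          (∏ j ∈ Finset.Icc 1 k, (((μm : ℂ) + I * y) - (μ j : ℂ))))

/-!
By Fubini, the convolution can be taken inside the contour integral, where it acts on the
`x`-dependence `e^{-xz}` alone: for `Re z = μ_- < μ_n`,
`∫_{-∞}^x e^{μ_n (y - x)} e^{-yz} dy = e^{-xz} / (μ_n - z)`.
The factor `1 / (μ_n - z) = -1 / (z - μ_n)` removes `z - μ_n` from the product and flips the sign
`(-1)^{n-k}`. Fubini applies because on the contour `|e^{t z²/2}| = e^{t (μ_-² - s²)/2}` decays
like a Gaussian in `s = Im z`, which beats the polynomial growth of the product.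
-/

theorem integrable_add_abs_pow_mul_exp_neg_mul_sq {b C : ℝ} (hb : 0 < b) (hC : 0 ≤ C) (m : ℕ) :
    Integrable fun s : ℝ => (C + |s|) ^ m * Real.exp (-b * s ^ 2) := by
  have h_pow (j : ℕ) : Integrable fun s : ℝ => |s| ^ j * Real.exp (-b * s ^ 2) := by
    simpa [Real.rpow_natCast, abs_mul, abs_pow] using
      (integrable_rpow_mul_exp_neg_mul_sq hb (s := j) (by linarith [j.cast_nonneg (α := ℝ)])).norm
  refine (((h_pow 0).const_mul (C ^ m)).add (h_pow m) |>.const_mul (2 ^ (m - 1))).mono'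
    (by fun_prop) (ae_of_all _ fun s => ?_)
  simp only [Pi.add_apply, pow_zero, one_mul]
  rw [Real.norm_of_nonneg (by positivity), ← add_mul, ← mul_assoc]
  gcongr
  exact add_pow_le hC (abs_nonneg s) m

theorem norm_cexp_mul_add_I_mul_sq_div_two (t a s : ℝ) :
    ‖cexp (t * ((a : ℂ) + I * s) ^ 2 / 2)‖ =
      Real.exp (t * a ^ 2 / 2) * Real.exp (-(t / 2) * s ^ 2) := by
  rw [norm_exp, ← Real.exp_add]
  congr 1
  have : (t : ℂ) * ((a : ℂ) + I * s) ^ 2 / 2 =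
      ((t * (a ^ 2 - s ^ 2) / 2 : ℝ) : ℂ) + ((t * a * s : ℝ) : ℂ) * I := by
    push_cast
    linear_combination ((t : ℂ) * (s : ℂ) ^ 2 / 2) * I_sq
  rw [this, add_re, ofReal_re, re_ofReal_mul, I_re, mul_zero, add_zero]
  ring

theorem norm_prod_add_I_mul_sub_le {ι : Type*} (S : Finset ι) (w : ι → ℂ) (a s : ℝ) :
    ‖∏ j ∈ S, ((a : ℂ) + I * s - w j)‖ ≤ (∑ j ∈ S, ‖(a : ℂ) - w j‖ + |s|) ^ S.card := by
  rw [norm_prod, ← prod_const]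
  refine prod_le_prod (fun _ _ => norm_nonneg _) fun j hj => ?_
  calc ‖(a : ℂ) + I * s - w j‖ = ‖((a : ℂ) - w j) + I * s‖ := by ring_nf
    _ ≤ ‖(a : ℂ) - w j‖ + |s| := by simpa using norm_add_le ((a : ℂ) - w j) (I * s)
    _ ≤ _ := by
      gcongr
      exact single_le_sum (f := fun j => ‖(a : ℂ) - w j‖) (fun _ _ => norm_nonneg _) hj

theorem integrable_cexp_mul_add_I_mul_sq_mul_prod {ι : Type*} (S : Finset ι) (w : ι → ℂ)
    {t : ℝ} (ht : 0 < t) (a : ℝ) :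
    Integrable fun s : ℝ =>
      cexp (t * ((a : ℂ) + I * s) ^ 2 / 2) * ∏ j ∈ S, ((a : ℂ) + I * s - w j) := by
  refine ((integrable_add_abs_pow_mul_exp_neg_mul_sq (half_pos ht)
    (sum_nonneg (s := S) fun j _ => norm_nonneg ((a : ℂ) - w j)) S.card).const_mul
    (Real.exp (t * a ^ 2 / 2))).mono' (by fun_prop) (ae_of_all _ fun s => ?_)
  rw [norm_mul, norm_cexp_mul_add_I_mul_sq_div_two, mul_assoc,
    mul_comm (Real.exp (-(t / 2) * s ^ 2))]
  gcongr
  exact norm_prod_add_I_mul_sub_le S w a s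

theorem integral_Iic_exp_mul_integral_mul_cexp {g z : ℝ → ℂ} {a c : ℝ} (hg : Integrable g)
    (hz : Continuous z) (hre : ∀ s, (z s).re = a) (hac : a < c) (x : ℝ) :
    ∫ y in Set.Iic x, (Real.exp (c * (y - x)) : ℂ) * ∫ s, g s * cexp (-(y * z s))
      = ∫ s, g s * cexp (-(x * z s)) / (c - z s) := by
  set F : ℝ → ℝ → ℂ := fun y s => (Real.exp (c * (y - x)) : ℂ) * (g s * cexp (-(y * z s)))
  have hF_norm (y s : ℝ) : ‖F y s‖ = Real.exp (-(c * x)) * Real.exp ((c - a) * y) * ‖g s‖ := by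
    simp only [F, norm_mul, norm_real, Real.norm_of_nonneg (Real.exp_pos _).le, norm_exp, neg_re,
      re_ofReal_mul, hre]
    rw [mul_comm ‖g s‖, ← mul_assoc, ← Real.exp_add, ← Real.exp_add]
    ring_nf
  have hF_int : Integrable (Function.uncurry F) ((volume.restrict (Set.Iic x)).prod volume) := by
    refine ((integrableOn_exp_mul_Iic (sub_pos.2 hac) x).const_mul (Real.exp (-(c * x)))).mul_prod
      hg.norm |>.mono' ?_ (ae_of_all _ fun p => (hF_norm p.1 p.2).le)
    have h_exp : Continuous fun p : ℝ × ℝ => (Real.exp (c * (p.1 - x)) : ℂ) := by fun_prop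
    have h_cexp : Continuous fun p : ℝ × ℝ => cexp (-(p.1 * z p.2)) := by fun_prop
    exact h_exp.aestronglyMeasurable.mul
      (hg.aestronglyMeasurable.comp_snd.mul h_cexp.aestronglyMeasurable)
  have h_inner (s : ℝ) : ∫ y in Set.Iic x, F y s = g s * cexp (-(x * z s)) / (c - z s) := by
    have hcz : 0 < ((c : ℂ) - z s).re := by simp [hre, hac]
    have hF (y : ℝ) : F y s = g s * cexp (-(c * x)) * cexp ((c - z s) * y) := by
      simp only [F, ofReal_exp, mul_left_comm _ (g s), mul_assoc, ← Complex.exp_add]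
      push_cast; ring_nf
    simp_rw [hF, integral_const_mul, integral_exp_mul_complex_Iic hcz, mul_div_assoc', mul_assoc,
      ← Complex.exp_add]
    ring_nf
  calc ∫ y in Set.Iic x, (Real.exp (c * (y - x)) : ℂ) * ∫ s, g s * cexp (-(y * z s))
      = ∫ y in Set.Iic x, ∫ s, F y s := by simp_rw [F, integral_const_mul]
    _ = ∫ s, ∫ y in Set.Iic x, F y s := integral_integral_swap hF_int
    _ = _ := by simp_rw [h_inner]

theorem add_I_mul_sub_ofReal_ne_zero {a b : ℝ} (hab : a ≠ b) (s : ℝ) :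
    (a : ℂ) + I * s - b ≠ 0 := by
  intro h
  simpa [sub_eq_zero.not.mpr hab] using congrArg re h

section linePsiWeight

variable (μ : ℕ → ℝ) (μm : ℝ) (n k : ℕ) (t : ℝ)

noncomputable def linePsiWeight (s : ℝ) : ℂ :=
  I * cexp (t * ((μm : ℂ) + I * s) ^ 2 / 2) *
    ((∏ j ∈ Icc 1 n, ((μm : ℂ) + I * s - μ j)) / ∏ j ∈ Icc 1 k, ((μm : ℂ) + I * s - μ j))

theorem linePsi_eq_integral_linePsiWeight (x : ℝ) :
    linePsi μ μm n k t x = (-1 : ℂ) ^ ((n : ℤ) - k) / (2 * Real.pi * I) *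
      ∫ s : ℝ, linePsiWeight μ μm n k t s * cexp (-(x * ((μm : ℂ) + I * s))) := by
  unfold linePsi linePsiWeight
  congr 1
  refine integral_congr_ae (ae_of_all _ fun s => ?_)
  dsimp only
  rw [sub_eq_add_neg, Complex.exp_add]
  ring

variable {μ μm n k t}

theorem linePsiWeight_sub_one (hn : 1 ≤ n) (hμn : μm ≠ μ n) (s : ℝ) :
    linePsiWeight μ μm (n - 1) k t s = linePsiWeight μ μm n k t s / ((μm : ℂ) + I * s - μ n) := by
  obtain ⟨m, rfl⟩ := Nat.exists_eq_add_of_le' hn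
  rw [linePsiWeight, linePsiWeight, Nat.add_sub_cancel, prod_Icc_succ_top (by omega)]
  field_simp [add_I_mul_sub_ofReal_ne_zero hμn s]

theorem integrable_linePsiWeight (hμk : ∀ j ∈ Icc 1 k, μm ≠ μ j) (hkn : k ≤ n) (ht : 0 < t) :
    Integrable (linePsiWeight μ μm n k t) := by
  have hsplit (s : ℝ) : linePsiWeight μ μm n k t s =
      I * (cexp (t * ((μm : ℂ) + I * s) ^ 2 / 2) * ∏ j ∈ Ioc k n, ((μm : ℂ) + I * s - μ j)) := by
    have hk : ∏ j ∈ Icc 1 k, ((μm : ℂ) + I * s - μ j) ≠ 0 :=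
      prod_ne_zero_iff.2 fun j hj => add_I_mul_sub_ofReal_ne_zero (hμk j hj) s
    have hIcc (m : ℕ) : Icc 1 m = Ioc 0 m := Icc_succ_left_eq_Ioc 0 m
    rw [hIcc] at hk
    rw [linePsiWeight, hIcc, hIcc, ← prod_Ioc_consecutive _ k.zero_le hkn,
      mul_div_cancel_left₀ _ hk, mul_assoc]
  rw [funext hsplit]
  exact
    (integrable_cexp_mul_add_I_mul_sq_mul_prod (Ioc k n) (fun j => (μ j : ℂ)) ht μm).const_mul I

end linePsiWeight

theorem stmt0_general (N : ℕ) (μ : ℕ → ℝ) (μm : ℝ) (hμm : ∀ j ∈ Finset.Icc 1 N, μm < μ j)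
    (n k : ℕ) (hn1 : 1 ≤ n) (hnN : n ≤ N) (hkn : k ≤ n)
    (t : ℝ) (ht : 0 < t) (x : ℝ) :
    (∫ y in Set.Iic x, (Real.exp (μ n * (y - x)) : ℂ) * linePsi μ μm n k t y)
      = linePsi μ μm (n - 1) k t x := by
  have hμn : μm < μ n := hμm n (mem_Icc.2 ⟨hn1, hnN⟩)
  have hμk : ∀ j ∈ Icc 1 k, μm ≠ μ j := fun j hj =>
    (hμm j (Icc_subset_Icc le_rfl (hkn.trans hnN) hj)).ne
  have hsign : (-1 : ℂ) ^ (((n - 1 : ℕ) : ℤ) - k) = -(-1 : ℂ) ^ ((n : ℤ) - k) := by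
    rw [Nat.cast_sub hn1, Nat.cast_one, sub_right_comm, zpow_sub_one₀ (by norm_num), inv_neg_one,
      mul_neg_one]
  simp_rw [linePsi_eq_integral_linePsiWeight, mul_left_comm _ ((-1 : ℂ) ^ ((n : ℤ) - k) / _),
    integral_const_mul]
  rw [integral_Iic_exp_mul_integral_mul_cexp (integrable_linePsiWeight hμk hkn ht) (by fun_prop)
    (fun s => by simp) hμn, hsign, neg_div, neg_mul, ← mul_neg, ← integral_neg]
  congr 2 with s
  rw [linePsiWeight_sub_one hn1 hμn.ne, div_mul_eq_mul_div, ← div_neg, neg_sub]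

/-- `(φ_n ∗ Ψ_{n-k}^{n,t})(x) = Ψ_{n-1-k}^{n-1,t}(x)`. -/
theorem stmt0 (N : ℕ) (μ : ℕ → ℝ) (μm : ℝ) (hμm : ∀ j ∈ Finset.Icc 1 N, μm < μ j)
    (n k : ℕ) (hn1 : 1 ≤ n) (hnN : n ≤ N) (hk1 : 1 ≤ k) (hkn : k ≤ n)
    (t : ℝ) (ht : 0 < t) (x : ℝ) :
    (∫ y in Set.Iic x, (Real.exp (μ n * (y - x)) : ℂ) * linePsi μ μm n k t y)
      = linePsi μ μm (n - 1) k t x :=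
  stmt0_general N μ μm hμm n k hn1 hnN hkn t ht x
end

section
/- Let reals λ^{n-1} = (λ_1^{n-1} < ··· < λ_{n-1}^{n-1}) and λ^n = (λ_1^n < ··· < λ_n^n) be strictly ordered. Define the n×n matrix A with entries A_{ij} = φ_n(λ_i^{n-1}, λ_j^n) for i ≤ n-1 and A_{nj} = e^{μ_n λ_j^n} (virtual row), where φ_n(x,y) = e^{μ_n(y-x)}·1[x > y]. Then det A = (∏_{j=1}^{n} e^{μ_n λ_j^n})(∏_{j=1}^{n-1} e^{-μ_n λ_j^{n-1}}) · 1[λ^{n-1} ≼ λ^n], where λ^{n-1} ≼ λ^n means λ_k^n ≤ λ_k^{n-1} ≤ λ_{k+1}^n for all 1 ≤ k ≤ n-1. -/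
/-!
Write `A = diag(v) · B · diag(e^{μ λ^n_j})` with `v_i = e^{-μ λ^{n-1}_i}` (and `v_n = 1`), where
`B` is the `0/1` matrix with `B_{ij} = 1[λ^n_j < λ^{n-1}_i]` and a last row of ones. The rows of `B`
are indicators of initial segments of the columns, increasing with `i`. Unless two rows coincide or
one is zero (so `det B = 0`), the segment ends form a strictly monotone self-map of a finite linear
order, hence the identity, and `B` is unitriangular. For `B`, "row `i` is the segment `{j ≤ i}`"
says exactly that `λ^{n-1}` interlaces `λ^n`.
-/

open Finset Classical

theorem exists_forall_iff_le_of_antitone {α : Type*} [LinearOrder α] [Fintype α] {P : α → Prop}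
    (hP : Antitone P) (hne : ∃ a, P a) : ∃ d, ∀ a, P a ↔ a ≤ d := by
  obtain ⟨d, hd, hmax⟩ := (univ.filter P).exists_max_image id
    (let ⟨a, ha⟩ := hne; ⟨a, by simpa using ha⟩)
  refine ⟨d, fun a => ⟨fun ha => hmax a (by simpa using ha), fun ha => hP ha ?_⟩⟩
  simpa using hd

namespace Matrix

variable {ι R : Type*} [Fintype ι] [LinearOrder ι] [CommRing R]

theorem det_of_nested_lowerSets (P : ι → ι → Prop) [DecidableRel P] (hmono : Monotone P)
    (hanti : ∀ i, Antitone (P i)) :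
    det (of fun i j => if P i j then (1 : R) else 0) = if ∀ i j, P i j ↔ j ≤ i then 1 else 0 := by
  by_cases hP : ∀ i j, P i j ↔ j ≤ i
  · rw [if_pos hP, det_of_isLowerTriangular]
    · simp [hP]
    · intro i j hij
      simp [hP, not_le.mpr (OrderDual.toDual_lt_toDual.mp hij)]
  rw [if_neg hP]
  by_contra hdet
  have hrow_ne : ∀ i, ∃ j, P i j := fun i => by
    by_contra! hi
    exact hdet (det_eq_zero_of_row_eq_zero i fun j => by simp [hi j])
  choose d hd using fun i => exists_forall_iff_le_of_antitone (hanti i) (hrow_ne i)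
  have hd_strictMono : StrictMono d := by
    refine Monotone.strictMono_of_injective (fun i i' hii' => ?_) (fun i i' hdd => ?_)
    · exact (hd i' _).1 (hmono hii' _ ((hd i _).2 le_rfl))
    · by_contra hii'
      exact hdet (det_zero_of_row_eq hii' (funext fun j => by simp [hd, hdd]))
  have hd_id : ∀ i, d i = i := fun i => le_antisymm hd_strictMono.apply_le hd_strictMono.le_apply
  exact hP fun i j => by rw [hd, hd_id]

end Matrix

section Interlacing

variable {m : ℕ} {lam1 : Fin m → ℝ} {lam2 : Fin (m + 1) → ℝ}

/-- The virtual row `i = m` is treated as if `λ^{n-1}_n = +∞`. -/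
def LiesBelow (lam1 : Fin m → ℝ) (lam2 : Fin (m + 1) → ℝ) (i j : Fin (m + 1)) : Prop :=
  ∀ h : (i : ℕ) < m, lam2 j < lam1 ⟨i, h⟩

theorem liesBelow_monotone (h1 : StrictMono lam1) : Monotone (LiesBelow lam1 lam2) :=
  fun _ _ hii' _ hij hi' =>
    (hij (lt_of_le_of_lt hii' hi')).trans_le (h1.monotone (Fin.mk_le_mk.mpr hii'))

theorem liesBelow_antitone (h2 : StrictMono lam2) (i : Fin (m + 1)) :
    Antitone (LiesBelow lam1 lam2 i) :=
  fun _ _ hjj' hij hi => (h2.monotone hjj').trans_lt (hij hi)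

theorem forall_liesBelow_iff_le_iff_interlacing (h2 : StrictMono lam2)
    (hdist : ∀ i j, lam1 i ≠ lam2 j) :
    (∀ i j, LiesBelow lam1 lam2 i j ↔ j ≤ i) ↔
      ∀ k, lam2 k.castSucc < lam1 k ∧ lam1 k < lam2 k.succ := by
  have hrows : (∀ i j, LiesBelow lam1 lam2 i j ↔ j ≤ i) ↔
      ∀ k j, lam2 j < lam1 k ↔ j ≤ k.castSucc := by
    rw [Fin.forall_fin_succ']
    simp [LiesBelow, Fin.le_last]
  rw [hrows]
  refine ⟨fun h k => ⟨(h k _).2 le_rfl, ?_⟩,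
    fun h k j => ⟨fun hj => ?_, fun hj => (h2.monotone hj).trans_lt (h k).1⟩⟩
  · refine lt_of_le_of_ne (not_lt.mp fun hlt => ?_) (hdist _ _)
    exact ((h k _).1 hlt).not_gt Fin.castSucc_lt_succ
  · by_contra hkj
    have hsucc : k.succ ≤ j := Fin.castSucc_lt_iff_succ_le.mp (not_le.mp hkj)
    exact ((h k).2.trans_le (h2.monotone hsucc)).not_gt hj

theorem virtualRowMatrix_eq_diagonal_mul_mul_diagonal (μ : ℝ) :
    (Matrix.of fun i j : Fin (m + 1) =>
        if h : (i : ℕ) < m then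
          (if lam2 j < lam1 ⟨i, h⟩ then Real.exp (μ * (lam2 j - lam1 ⟨i, h⟩)) else 0)
        else Real.exp (μ * lam2 j)) =
      Matrix.diagonal (Fin.snoc (fun i => Real.exp (-μ * lam1 i)) 1) *
        Matrix.of (fun i j => if LiesBelow lam1 lam2 i j then (1 : ℝ) else 0) *
        Matrix.diagonal fun j => Real.exp (μ * lam2 j) := by
  ext i j
  by_cases hi : (i : ℕ) < m
  · simp only [Matrix.of_apply, Matrix.mul_diagonal, Matrix.diagonal_mul, Fin.snoc, LiesBelow,
      dif_pos hi, forall_prop_of_true hi]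
    split_ifs
    · rw [mul_one, cast_eq, Fin.castLT, ← Real.exp_add]
      ring_nf
    · simp
  · simp [Fin.snoc, LiesBelow, hi]

end Interlacing

/-- determinant formula with a virtual row.  For strictly ordered
`λ^{n-1}` (length `m`) and `λ^n` (length `m+1`), with `A_{ij} = φ_n(λ_i^{n-1}, λ_j^n)`
for `i ≤ m` and `A_{(m+1)j} = e^{μ λ_j^n}`,
`det A = (∏_j e^{μ λ_j^n})(∏_j e^{-μ λ_j^{n-1}}) · 1[λ^{n-1} ≺ λ^n]` (strict interlacing). -/
theorem stmt8 (m : ℕ) (μ : ℝ) (lam1 : Fin m → ℝ) (lam2 : Fin (m + 1) → ℝ)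
    (h1 : StrictMono lam1) (h2 : StrictMono lam2)
    (hdist : ∀ i j, lam1 i ≠ lam2 j) :
    Matrix.det (Matrix.of fun i j : Fin (m + 1) =>
        if h : (i : ℕ) < m then
          (if lam2 j < lam1 ⟨i, h⟩ then Real.exp (μ * (lam2 j - lam1 ⟨i, h⟩)) else 0)
        else Real.exp (μ * lam2 j))
      = (∏ j, Real.exp (μ * lam2 j)) * (∏ i, Real.exp (-μ * lam1 i)) *
          (if ∀ k : Fin m, lam2 k.castSucc < lam1 k ∧ lam1 k < lam2 k.succ then 1 else 0) := by
  rw [virtualRowMatrix_eq_diagonal_mul_mul_diagonal, Matrix.det_mul, Matrix.det_mul, Matrix.det_diagonal,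
    Matrix.det_diagonal, Fin.prod_univ_castSucc, Fin.snoc_last, mul_one,
    Matrix.det_of_nested_lowerSets _ (liesBelow_monotone h1) (liesBelow_antitone h2)]
  simp only [Fin.snoc_castSucc, forall_liesBelow_iff_le_iff_interlacing h2 hdist]
  ring
end

section
/- Let b : [0,∞) → ℝ be continuous with b(0) = 0, f : [0,∞) → ℝ continuous, y ∈ ℝ with f(0) < y. Then for all t ≥ 0, y + b(t) − min{ 0, inf_{0 ≤ s ≤ t} ( y + b(s) − f(s) ) } = max{ y + b(t), sup_{0 ≤ s ≤ t} ( f(s) + b(t) − b(s) ) }. -/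
/-! With `S = sup_{[0,t]} (f - b)`, finite since `f - b` is continuous on the compact interval,
the infimum on the left is `y - S` and the supremum on the right is `S + b t`; both sides then equal
`max (y + b t) (S + b t)` because `a - min u v = max (a - u) (a - v)`. -/

theorem csInf_image_const_sub {α : Type*} (g : α → ℝ) {K : Set α} (hK : K.Nonempty)
    (hg : BddAbove (g '' K)) (c : ℝ) :
    sInf ((fun s => c - g s) '' K) = c - sSup (g '' K) := by
  have hanti : Antitone (fun x : ℝ => c - x) := fun _ _ h => sub_le_sub_left h c
  rw [hanti.map_csSup_of_continuousAt (by fun_prop) (hK.image g) hg, Set.image_image]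

theorem csSup_image_add_const {α : Type*} (g : α → ℝ) {K : Set α} (hK : K.Nonempty)
    (hg : BddAbove (g '' K)) (c : ℝ) :
    sSup ((fun s => g s + c) '' K) = sSup (g '' K) + c := by
  have hmono : Monotone (fun x : ℝ => x + c) := fun _ _ h => add_le_add_left h c
  rw [hmono.map_csSup_of_continuousAt (by fun_prop) (hK.image g) hg, Set.image_image]

theorem stmt16_general (b f : ℝ → ℝ) (hb : ContinuousOn b (Set.Ici 0))
    (hf : ContinuousOn f (Set.Ici 0)) (y : ℝ) (t : ℝ) (ht : 0 ≤ t) :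
    y + b t - min 0 (sInf ((fun s => y + b s - f s) '' Set.Icc 0 t))
      = max (y + b t) (sSup ((fun s => f s + b t - b s) '' Set.Icc 0 t)) := by
  have hIcc : Set.Icc 0 t ⊆ Set.Ici 0 := fun _ hs => hs.1
  have hbdd : BddAbove ((fun s => f s - b s) '' Set.Icc 0 t) :=
    (isCompact_Icc.image_of_continuousOn ((hf.mono hIcc).sub (hb.mono hIcc))).bddAbove
  have hne : (Set.Icc 0 t).Nonempty := Set.nonempty_Icc.2 ht
  have hinf := csInf_image_const_sub (fun s => f s - b s) hne hbdd y
  have hsup := csSup_image_add_const (fun s => f s - b s) hne hbdd (b t)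
  simp only [sub_sub_eq_add_sub, sub_add_eq_add_sub] at hinf hsup
  rw [hinf, hsup, ← max_sub_sub_left]
  congr 1 <;> ring

/-- the two forms of the Skorokhod reflection map coincide:
for continuous `b` (with `b 0 = 0`), continuous barrier `f` with `f 0 < y`, and `t ≥ 0`,
`y + b(t) − min{0, inf_{0≤s≤t}(y + b(s) − f(s))}
  = max{y + b(t), sup_{0≤s≤t}(f(s) + b(t) − b(s))}`. -/
theorem stmt16 (b f : ℝ → ℝ) (hb : ContinuousOn b (Set.Ici 0)) (hb0 : b 0 = 0)
    (hf : ContinuousOn f (Set.Ici 0)) (y : ℝ) (hy : f 0 < y) (t : ℝ) (ht : 0 ≤ t) :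
    y + b t - min 0 (sInf ((fun s => y + b s - f s) '' Set.Icc 0 t))
      = max (y + b t) (sSup ((fun s => f s + b t - b s) '' Set.Icc 0 t)) :=
  stmt16_general b f hb hf y t ht
end
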